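/- Let R be an algebra over a field F, let σ be an automorphism of R, and let D be a q-skew σ-derivation on R. Then J(R[x;σ,D]) ∩ R is closed under σ, i.e., σ(J(R[x;σ,D]) ∩ R) ⊆ J(R[x;σ,D]) ∩ R. -/

import Mathlib

/-!
Because `Dσ = qσD`, the element `y = q⁻¹x` satisfies `y·σ(a) = σ(σ a)·y + σ(D a)`, i.e. the pair
`(σ(R), y)` obeys the defining relation of `R[x;σ,D]` transported along `σ`. By the universal
property of the Ore extension, `σ` therefore extends to a ring endomorphism of `R[x;σ,D]` with
`x ↦ q⁻¹x`. It is surjective since `σ` is, and a surjective ring homomorphism maps the Jacobson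
radical into the Jacobson radical.
-/

/-- `S` is (a copy of) the Ore extension `R[x;σ,D]` of `R`: `ι : R → S` is the inclusion of
coefficients, `X ∈ S` is the variable, every element of `S` is uniquely a polynomial
`Σᵢ ι(aᵢ) * Xⁱ`, and multiplication is governed by `X * a = σ(a) * X + D(a)`. -/
structure IsOreExtension {R S : Type*} [Ring R] [Ring S]
    (σ : R → R) (D : R → R) (ι : R → S) (X : S) : Prop where
  σ_add : ∀ a b : R, σ (a + b) = σ a + σ b
  σ_mul : ∀ a b : R, σ (a * b) = σ a * σ b
  σ_one : σ 1 = 1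
  D_add : ∀ a b : R, D (a + b) = D a + D b
  D_mul : ∀ a b : R, D (a * b) = σ a * D b + D a * b
  ι_add : ∀ a b : R, ι (a + b) = ι a + ι b
  ι_mul : ∀ a b : R, ι (a * b) = ι a * ι b
  ι_one : ι 1 = 1
  X_comm : ∀ a : R, X * ι a = ι (σ a) * X + ι (D a)
  repr : ∀ s : S, ∃ c : ℕ →₀ R, s = c.sum fun i a => ι a * X ^ i
  uniq : ∀ c : ℕ →₀ R, (c.sum fun i a => ι a * X ^ i) = 0 → c = 0

open Polynomial

theorem Ideal.apply_mem_jacobson_bot_of_surjective {S T : Type*} [Ring S] [Ring T] {f : S →+* T}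
    (hf : Function.Surjective f) {s : S} (hs : s ∈ (⊥ : Ideal S).jacobson) :
    f s ∈ (⊥ : Ideal T).jacobson := by
  have : RingHomSurjective f := ⟨hf⟩
  rw [Ideal.jacobson_bot] at hs ⊢
  exact Ring.le_comap_jacobson f hs

lemma Polynomial.eval₂_eq_sum_coeff {R T : Type*} [Semiring R] [Semiring T] (f : R →+* T) (x : T)
    (p : R[X]) :
    p.eval₂ f x = p.toFinsupp.coeff.sum fun i a => f a * x ^ i := by
  rw [eval₂_eq_sum, Polynomial.sum_def, Finsupp.sum]
  rfl

namespace IsOreExtension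

section Lift

variable {R S T : Type*} [Ring R] [Ring S] [Ring T] {σ D : R → R} {ι : R → S} {X : S}
variable (h : IsOreExtension σ D ι X)
include h

def σHom : R →+* R := RingHom.mk' ⟨⟨σ, h.σ_one⟩, h.σ_mul⟩ h.σ_add

def ιHom : R →+* S := RingHom.mk' ⟨⟨ι, h.ι_one⟩, h.ι_mul⟩ h.ι_add

@[simp] lemma σHom_apply (a : R) : h.σHom a = σ a := rfl

@[simp] lemma ιHom_apply (a : R) : h.ιHom a = ι a := rfl

lemma eval₂_bijective : Function.Bijective fun p : R[X] => p.eval₂ h.ιHom X := by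
  refine ⟨fun p p' hpp' => ?_, fun s => ?_⟩
  · have hzero : (p - p').eval₂ h.ιHom X = 0 := by
      rw [eval₂_sub]
      exact sub_eq_zero.mpr hpp'
    rw [eval₂_eq_sum_coeff] at hzero
    have hcoeff := h.uniq _ hzero
    exact sub_eq_zero.mp (toFinsupp_eq_zero.mp (AddMonoidAlgebra.coeffEquiv.injective hcoeff))
  · obtain ⟨c, rfl⟩ := h.repr s
    exact ⟨ofFinsupp (.ofCoeff c), eval₂_eq_sum_coeff _ _ _⟩

noncomputable def evalEquiv : R[X] ≃+ S :=
  AddEquiv.ofBijective (eval₂AddMonoidHom h.ιHom X) h.eval₂_bijective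

@[elab_as_elim]
lemma induction_on {P : S → Prop} (s : S) (add : ∀ s t, P s → P t → P (s + t))
    (monomial : ∀ (n : ℕ) (a : R), P (ι a * X ^ n)) : P s := by
  obtain ⟨p, rfl⟩ := h.eval₂_bijective.2 s
  induction p using Polynomial.induction_on' with
  | add p p' hp hp' => simpa only [eval₂_add] using add _ _ hp hp'
  | monomial n a => simpa only [eval₂_monomial, ιHom_apply] using monomial n a

lemma mem_of_forall_ι_mem_of_X_mem (A : Subring S) (hι : ∀ a, ι a ∈ A) (hX : X ∈ A) (s : S) :
    s ∈ A :=
  h.induction_on s (fun _ _ => A.add_mem) fun n a => A.mul_mem (hι a) (A.pow_mem hX n)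

variable (ι' : R →+* T) (Y : T)

noncomputable def lift : S →+ T :=
  (eval₂AddMonoidHom ι' Y).comp h.evalEquiv.symm.toAddMonoidHom

lemma lift_eval₂ (p : R[X]) : h.lift ι' Y (p.eval₂ h.ιHom X) = p.eval₂ ι' Y := by
  change eval₂ ι' Y (h.evalEquiv.symm (h.evalEquiv p)) = _
  rw [AddEquiv.symm_apply_apply]

lemma lift_ι_mul_X_pow (a : R) (n : ℕ) : h.lift ι' Y (ι a * X ^ n) = ι' a * Y ^ n := by
  simpa only [eval₂_monomial, ιHom_apply] using h.lift_eval₂ ι' Y (monomial n a)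

lemma lift_ι_mul (a : R) (s : S) : h.lift ι' Y (ι a * s) = ι' a * h.lift ι' Y s := by
  induction s using h.induction_on with
  | add s t hs ht => rw [mul_add, map_add, map_add, hs, ht, mul_add]
  | monomial n b =>
    rw [← mul_assoc, ← h.ι_mul, lift_ι_mul_X_pow, lift_ι_mul_X_pow, map_mul, mul_assoc]

variable {ι' Y} (hY : ∀ a, Y * ι' a = ι' (σ a) * Y + ι' (D a))
include hY

lemma lift_X_mul (s : S) : h.lift ι' Y (X * s) = Y * h.lift ι' Y s := by
  induction s using h.induction_on with
  | add s t hs ht => rw [mul_add, map_add, map_add, hs, ht, mul_add]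
  | monomial n b =>
    rw [← mul_assoc, h.X_comm, add_mul, mul_assoc, ← pow_succ', map_add, lift_ι_mul_X_pow,
      lift_ι_mul_X_pow, lift_ι_mul_X_pow, ← mul_assoc, hY, add_mul, mul_assoc, pow_succ']

lemma lift_X_pow_mul (n : ℕ) (s : S) : h.lift ι' Y (X ^ n * s) = Y ^ n * h.lift ι' Y s := by
  induction n generalizing s with
  | zero => rw [pow_zero, pow_zero, one_mul, one_mul]
  | succ n ih => rw [pow_succ', pow_succ', mul_assoc, h.lift_X_mul hY, ih, mul_assoc]

lemma lift_mul (s t : S) : h.lift ι' Y (s * t) = h.lift ι' Y s * h.lift ι' Y t := by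
  induction s using h.induction_on with
  | add s s' hs hs' => rw [add_mul, map_add, map_add, hs, hs', add_mul]
  | monomial n a =>
    rw [mul_assoc, lift_ι_mul, h.lift_X_pow_mul hY, lift_ι_mul_X_pow, mul_assoc]

noncomputable def liftHom : S →+* T where
  __ := h.lift ι' Y
  map_one' := by
    change h.lift ι' Y 1 = 1
    simpa only [pow_zero, mul_one, h.ι_one, map_one] using h.lift_ι_mul_X_pow ι' Y 1 0
  map_mul' := h.lift_mul hY

lemma liftHom_apply (s : S) : h.liftHom hY s = h.lift ι' Y s := rfl

@[simp] lemma liftHom_ι (a : R) : h.liftHom hY (ι a) = ι' a := by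
  simpa only [liftHom_apply, pow_zero, mul_one] using h.lift_ι_mul_X_pow ι' Y a 0

@[simp] lemma liftHom_X : h.liftHom hY X = Y := by
  simpa only [liftHom_apply, pow_one, h.ι_one, one_mul, map_one] using h.lift_ι_mul_X_pow ι' Y 1 1

end Lift

section QSkew

variable {F R S : Type*} [Field F] [Ring R] [Algebra F R] [Ring S] {σ D : R → R} {ι : R → S}
  {X : S} (h : IsOreExtension σ D ι X) {q : F} (hq : q ≠ 0)
  (hskew : ∀ a : R, D (σ a) = q • σ (D a))
include h hq hskew

lemma qSkew_commutation (a : R) :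
    ι (algebraMap F R q⁻¹) * X * ι (σ a) =
      ι (σ (σ a)) * (ι (algebraMap F R q⁻¹) * X) + ι (σ (D a)) := by
  have hD : algebraMap F R q⁻¹ * D (σ a) = σ (D a) := by
    rw [hskew, Algebra.smul_def, ← mul_assoc, ← map_mul, inv_mul_cancel₀ hq, map_one, one_mul]
  rw [mul_assoc, h.X_comm, mul_add, ← mul_assoc, ← mul_assoc, ← h.ι_mul, ← h.ι_mul, hD,
    Algebra.commutes, h.ι_mul, mul_assoc]

noncomputable def σExtension : S →+* S :=
  h.liftHom (ι' := h.ιHom.comp h.σHom) (Y := ι (algebraMap F R q⁻¹) * X)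
    (h.qSkew_commutation hq hskew)

@[simp] lemma σExtension_ι (a : R) : h.σExtension hq hskew (ι a) = ι (σ a) :=
  h.liftHom_ι _ a

@[simp] lemma σExtension_X : h.σExtension hq hskew X = ι (algebraMap F R q⁻¹) * X :=
  h.liftHom_X _

lemma σExtension_surjective (hσ : Function.Surjective σ) :
    Function.Surjective (h.σExtension hq hskew) := by
  set φ := h.σExtension hq hskew
  have hι : ∀ a, ι a ∈ φ.range := fun a => by
    obtain ⟨b, rfl⟩ := hσ a
    exact ⟨ι b, h.σExtension_ι hq hskew b⟩
  have hX : X ∈ φ.range := by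
    obtain ⟨w, hw⟩ := hσ (algebraMap F R q)
    refine ⟨ι w * X, ?_⟩
    rw [map_mul, h.σExtension_ι, hw, h.σExtension_X, ← mul_assoc, ← h.ι_mul, ← map_mul,
      mul_inv_cancel₀ hq, map_one, h.ι_one, one_mul]
  exact fun s => h.mem_of_forall_ι_mem_of_X_mem φ.range hι hX s

end QSkew

end IsOreExtension

/-- If `R` is an algebra over a field `F`, `σ` is an automorphism of `R` and `D` is a `q`-skew
`σ`-derivation, then `J(R[x;σ,D]) ∩ R` is closed under `σ`. -/
theorem jacobson_cap_closed_under_sigma {F R S : Type*} [Field F]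
    [Ring R] [Algebra F R] [Ring S]
    (σ D : R → R) (ι : R → S) (X : S)
    (hOre : IsOreExtension σ D ι X) (hσ : Function.Bijective σ)
    (q : F) (hq : q ≠ 0) (hskew : ∀ a : R, D (σ a) = q • σ (D a)) :
    ∀ r : R, ι r ∈ (⊥ : Ideal S).jacobson → ι (σ r) ∈ (⊥ : Ideal S).jacobson := by
  intro r hr
  simpa only [hOre.σExtension_ι hq hskew] using
    Ideal.apply_mem_jacobson_bot_of_surjective (hOre.σExtension_surjective hq hskew hσ.2) hr
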